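/- Let n ≥ 4 and let p, q be integers with 2 ≤ p < q and 2q ≤ n. Let k_{2p}, k_{2q} be integers with 1 ≤ k_{2p} < p and 1 ≤ k_{2q} < q, and suppose q - k_{2q} ≥ p. Then in S_n the following exchange law holds: v_{2q}^{k_{2q}} · v_{2p}^{k_{2p}} = v_{2k_{2q}+2k_{2p}}^{k_{2q}} · v_{2p+2k_{2q}}^{k_{2p}} · v_{2q}^{k_{2q}}. -/

import Mathlib

/-! `t_m` fixes every point `≥ m` and cyclically shifts the initial segment `{0, …, m - 1}` down
by one, so a power of a `v_{2m}` is a rotation of an initial segment. Conjugating the rotation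
`v_{2p}^{k_{2p}}` by `v_{2q}^{k_{2q}}` moves it onto the block `{2k_{2q}, …, 2k_{2q} + 2p - 1}`,
which lies inside `{0, …, 2q - 1}` because `q - k_{2q} ≥ p`; and a rotation by `b` of a block
starting at `a` is a rotation of the initial segment of length `a + b` by `a` followed by a
rotation of the initial segment ending with the block by `b`. -/

/- We work in the symmetric group on `Fin n` (representing `{1, ..., n}` via `i ↦ i - 1`).
The paper multiplies permutations left-to-right: `(π₁ · π₂)(i) = π₂(π₁(i))`,
while Mathlib's `*` on `Equiv.Perm` is function composition: `(π₁ * π₂)(i) = π₁(π₂(i))`.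
Hence a paper product `A · B · C` is rendered below as `C * B * A`. -/

/-- `sP n i` is the transposition `sᵢ = (i, i+1)` (1-indexed), for `1 ≤ i ≤ n - 1`. -/
def sP (n i : ℕ) : Equiv.Perm (Fin n) :=
  if h : 1 ≤ i ∧ i < n then
    Equiv.swap ⟨i - 1, lt_of_le_of_lt (Nat.sub_le i 1) h.2⟩ ⟨i, h.2⟩
  else 1

/-- `tP n m` is `t_m = s₁ · s₂ ⋯ s_{m-1}` (paper's left-to-right product, so here the
factor for larger index is multiplied on the left).  `tP n 0 = tP n 1 = 1`. -/
def tP (n m : ℕ) : Equiv.Perm (Fin n) :=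
  (List.range (m - 1)).foldl (fun g j => sP n (j + 1) * g) 1

/-- `uP n r` is `u_{2r} = t_{2r-2} · s_{2r-1}` (paper order; here reversed). -/
def uP (n r : ℕ) : Equiv.Perm (Fin n) := sP n (2 * r - 1) * tP n (2 * r - 2)

/-- `vP n r` is `v_{2r} = t_{2r}²`. -/
def vP (n r : ℕ) : Equiv.Perm (Fin n) := (tP n (2 * r)) ^ 2

-- A rotation only for `k ≤ m`; otherwise the truncated subtraction `y + m - k` breaks it.
def rotateBelow (m k y : ℕ) : ℕ :=
  if y < m then (if y < k then y + m - k else y - k) else y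

def rotateBlock (a p b y : ℕ) : ℕ :=
  if a ≤ y then a + rotateBelow p b (y - a) else y

lemma rotateBelow_rotateBelow_eq_rotateBlock (a p b y : ℕ) (hb : b ≤ p) :
    rotateBelow (a + p) b (rotateBelow (a + b) a y) = rotateBlock a p b y := by
  unfold rotateBlock rotateBelow
  split_ifs <;> omega

lemma rotateBelow_rotateBlock_eq_rotateBelow_rotateBelow (a p q b y : ℕ) (hb : b ≤ p)
    (hapq : a + p ≤ q) :
    rotateBelow q a (rotateBlock a p b y) = rotateBelow p b (rotateBelow q a y) := by
  unfold rotateBlock rotateBelow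
  split_ifs <;> omega

lemma val_sP_apply (n i : ℕ) (hi : 1 ≤ i) (hin : i < n) (x : Fin n) :
    (sP n i x).val = if x.val = i - 1 then i else if x.val = i then i - 1 else x.val := by
  unfold sP
  rw [dif_pos ⟨hi, hin⟩, Equiv.swap_apply_def]
  split_ifs <;> simp only [Fin.ext_iff] at * <;> omega

lemma tP_succ (n m : ℕ) (hm : 1 ≤ m) : tP n (m + 1) = sP n m * tP n m := by
  unfold tP
  rw [show m + 1 - 1 = (m - 1) + 1 by omega, List.range_succ, List.foldl_append]
  simp only [List.foldl_cons, List.foldl_nil]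
  congr 2
  omega

lemma val_tP_apply (n m : ℕ) (hm : m ≤ n) (x : Fin n) :
    (tP n m x).val = if x.val < m then (if x.val = 0 then m - 1 else x.val - 1) else x.val := by
  induction m with
  | zero => simp [tP]
  | succ m ih =>
    rcases Nat.eq_zero_or_pos m with rfl | hm1
    · simp only [tP, Nat.sub_self, List.range_zero, List.foldl_nil, Equiv.Perm.one_apply]
      split_ifs <;> omega
    · rw [tP_succ n m hm1, Equiv.Perm.mul_apply, val_sP_apply n m hm1 (by omega), ih (by omega)]
      split_ifs <;> omega

lemma val_tP_pow_apply (n m k : ℕ) (hk : k ≤ m) (hm : m ≤ n) (x : Fin n) :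
    ((tP n m ^ k) x).val = rotateBelow m k x.val := by
  induction k with
  | zero => simp [rotateBelow]
  | succ k ih =>
    rw [pow_succ', Equiv.Perm.mul_apply, val_tP_apply n m hm, ih (by omega)]
    unfold rotateBelow
    split_ifs <;> omega

lemma val_vP_pow_apply (n m k : ℕ) (hk : k ≤ m) (hm : 2 * m ≤ n) (x : Fin n) :
    ((vP n m ^ k) x).val = rotateBelow (2 * m) (2 * k) x.val := by
  rw [vP, ← pow_mul, val_tP_pow_apply n (2 * m) (2 * k) (by omega) hm]

theorem v_exchange_case1_general (n p q kp kq : ℕ) (hq : 2 * q ≤ n)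
    (hkp2 : kp < p) (hkq2 : kq < q)
    (h : p ≤ q - kq) :
    vP n p ^ kp * vP n q ^ kq =
      vP n q ^ kq * vP n (p + kq) ^ kp * vP n (kq + kp) ^ kq := by
  ext x
  simp only [Equiv.Perm.mul_apply]
  rw [val_vP_pow_apply n p kp (by omega) (by omega), val_vP_pow_apply n q kq (by omega) hq,
    val_vP_pow_apply n q kq (by omega) hq, val_vP_pow_apply n (p + kq) kp (by omega) (by omega),
    val_vP_pow_apply n (kq + kp) kq (by omega) (by omega), mul_add, mul_add, add_comm (2 * p),
    rotateBelow_rotateBelow_eq_rotateBlock _ _ _ _ (by omega),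
    rotateBelow_rotateBlock_eq_rotateBelow_rotateBelow _ _ _ _ _ (by omega) (by omega)]

/-- exchange law for the `v`'s, case `q - k_{2q} ≥ p`:
`v_{2q}^{k_{2q}} · v_{2p}^{k_{2p}} = v_{2k_{2q}+2k_{2p}}^{k_{2q}} · v_{2p+2k_{2q}}^{k_{2p}} · v_{2q}^{k_{2q}}`
(paper order; rendered here in composition order, i.e. reversed).  Here `vP n m = v_{2m}`. -/
theorem v_exchange_case1 (n p q kp kq : ℕ) (hn : 4 ≤ n)
    (hp : 2 ≤ p) (hpq : p < q) (hq : 2 * q ≤ n)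
    (hkp1 : 1 ≤ kp) (hkp2 : kp < p) (hkq1 : 1 ≤ kq) (hkq2 : kq < q)
    (h : p ≤ q - kq) :
    vP n p ^ kp * vP n q ^ kq =
      vP n q ^ kq * vP n (p + kq) ^ kp * vP n (kq + kp) ^ kq :=
  v_exchange_case1_general n p q kp kq hq hkp2 hkq2 h
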